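/- Let η_a, ρ_a, η_b, ρ_b be distributions on {0,...,k−1} with d_TV(η_a,ρ_a) ≤ δ and d_TV(η_b,ρ_b) ≤ δ. Then |ε*(η_a,η_b) − ε*(ρ_a,ρ_b)| ≤ 2δ, where ε* denotes the minimum median width. -/

import Mathlib

open Finset

def IsDist (k : ℕ) (p : Fin k → ℝ) : Prop :=
  (∀ x, 0 ≤ p x) ∧ ∑ x, p x = 1

def IsJoint (k : ℕ) (η : Fin k → Fin k → ℝ) : Prop :=
  (∀ x y, 0 ≤ η x y) ∧ ∑ x, ∑ y, η x y = 1

def margA (k : ℕ) (η : Fin k → Fin k → ℝ) (x : Fin k) : ℝ := ∑ y, η x y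

def margB (k : ℕ) (η : Fin k → Fin k → ℝ) (y : Fin k) : ℝ := ∑ x, η x y

noncomputable def qLow (k : ℕ) (r : ℝ) (η : Fin k → Fin k → ℝ) : ℝ :=
  ∑ x : Fin k, ∑ y : Fin k, if ((x : ℕ) : ℝ) - ((y : ℕ) : ℝ) < r then η x y else 0

noncomputable def qUp (k : ℕ) (r : ℝ) (η : Fin k → Fin k → ℝ) : ℝ :=
  ∑ x : Fin k, ∑ y : Fin k, if ((x : ℕ) : ℝ) - ((y : ℕ) : ℝ) ≤ r then η x y else 0

noncomputable def ate (k : ℕ) (η : Fin k → Fin k → ℝ) : ℝ :=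
  ∑ x : Fin k, ∑ y : Fin k, (((x : ℕ) : ℝ) - ((y : ℕ) : ℝ)) * η x y

noncomputable def nuL (k : ℕ) (r : ℝ) (ηa ηb : Fin k → ℝ) : ℝ :=
  sSup {v | ∃ η, IsJoint k η ∧ margA k η = ηa ∧ margB k η = ηb ∧ v = qLow k r η}

noncomputable def nuU (k : ℕ) (r : ℝ) (ηa ηb : Fin k → ℝ) : ℝ :=
  sInf {v | ∃ η, IsJoint k η ∧ margA k η = ηa ∧ margB k η = ηb ∧ v = qUp k r η}

noncomputable def widthOf (k : ℕ) (r : ℝ) (ηa ηb : Fin k → ℝ) : ℝ :=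
  max (max (nuL k r ηa ηb - 1/2) 0) (max (1/2 - nuU k r ηa ηb) 0)

noncomputable def epsStar (k : ℕ) (ηa ηb : Fin k → ℝ) : ℝ :=
  sInf {e | ∃ r : ℤ, -((k : ℤ) - 1) ≤ r ∧ r ≤ (k : ℤ) - 1 ∧ e = widthOf k (r : ℝ) ηa ηb}

noncomputable def dTV (k : ℕ) (p q : Fin k → ℝ) : ℝ := (1/2) * ∑ x, |p x - q x|

noncomputable def dTV2 (k : ℕ) (η ρ : Fin k → Fin k → ℝ) : ℝ :=
  (1/2) * ∑ x, ∑ y, |η x y - ρ x y|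

/-!
Changing one marginal of a coupling from `p` to `q` moves the coupling by at most `d_TV(p, q)`:
keep the fraction `min (p x) (q x) / p x` of each row `x`, and spread the removed mass, with the
column profile it had, over the rows where `q` exceeds `p`. Doing this for both marginals, every
coupling of `(η_a, η_b)` lies within `d_TV(η_a, ρ_a) + d_TV(η_b, ρ_b)` of a coupling of
`(ρ_a, ρ_b)` and vice versa. Event probabilities such as `P[X - Y < r]` are 1-Lipschitz for the
total variation distance of couplings, so `ν_ℓ`, `ν_u`, every width `ε(r)` and their minimum `ε*`
move by at most `2δ`.
-/

section Redistribution

variable {α β : Type*} [Fintype α] [Fintype β]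

theorem exists_keep_and_redistribute (η : α → β → ℝ) (hη : ∀ x y, 0 ≤ η x y)
    (t : α → ℝ) (ht₀ : ∀ x, 0 ≤ t x) (ht₁ : ∀ x, t x ≤ 1) (a : α → ℝ) (ha : ∀ x, 0 ≤ a x)
    (hsum : ∑ x, a x = ∑ x, ∑ y, η x y * (1 - t x)) :
    ∃ ρ : α → β → ℝ, (∀ x y, 0 ≤ ρ x y) ∧ (∀ x, ∑ y, ρ x y = (∑ y, η x y) * t x + a x) ∧
      (∀ y, ∑ x, ρ x y = ∑ x, η x y) ∧ ∑ x, ∑ y, |ρ x y - η x y| ≤ 2 * ∑ x, a x := by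
  set s := ∑ x, a x
  set r : β → ℝ := fun y => ∑ x, η x y * (1 - t x)
  have hr : ∀ y, 0 ≤ r y := fun y =>
    sum_nonneg fun x _ => mul_nonneg (hη x y) (sub_nonneg.2 (ht₁ x))
  have hrs : ∑ y, r y = s := hsum ▸ sum_comm
  have hs : 0 ≤ s := sum_nonneg fun x _ => ha x
  have ha₀ : ∀ x, s = 0 → a x = 0 := fun x h =>
    (sum_eq_zero_iff_of_nonneg fun x _ => ha x).1 h x (mem_univ x)
  have hr₀ : ∀ y, s = 0 → r y = 0 := fun y h =>
    (sum_eq_zero_iff_of_nonneg fun y _ => hr y).1 (hrs.trans h) y (mem_univ y)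
  have hadd : ∀ x y, 0 ≤ a x * r y / s := fun x y => div_nonneg (mul_nonneg (ha x) (hr y)) hs
  -- `r y` is the mass removed from column `y`; row `x` receives the share `a x / s` of it.
  -- If `s = 0` then `a = 0` and `r = 0`, so the junk value of `/ 0` does no harm.
  refine ⟨fun x y => η x y * t x + a x * r y / s, fun x y => ?_, fun x => ?_, fun y => ?_, ?_⟩
  · exact add_nonneg (mul_nonneg (hη x y) (ht₀ x)) (hadd x y)
  · rw [sum_add_distrib, ← sum_mul, ← sum_div, ← mul_sum, hrs, mul_div_cancel_of_imp (ha₀ x)]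
  · rw [sum_add_distrib, ← sum_div, ← sum_mul, mul_comm, mul_div_cancel_of_imp (hr₀ y)]
    simp only [r, ← sum_add_distrib]
    exact sum_congr rfl fun x _ => by ring
  · calc ∑ x, ∑ y, |η x y * t x + a x * r y / s - η x y|
        ≤ ∑ x, ∑ y, (a x * r y / s + η x y * (1 - t x)) := by
          gcongr with x _ y _
          have hremoved := mul_nonneg (hη x y) (sub_nonneg.2 (ht₁ x))
          exact abs_sub_le_iff.2 ⟨by linarith [hadd x y], by linarith [hadd x y]⟩
      _ = s + s := by
          have hmoved : ∑ x, ∑ y, a x * r y / s = s := by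
            simp only [← sum_div, ← mul_sum, hrs, ← sum_mul]
            exact mul_self_div_self s
          simp only [sum_add_distrib]
          rw [hmoved, ← hsum]
      _ = 2 * s := by ring

theorem exists_fst_marginal_change (η : α → β → ℝ) (hη : ∀ x y, 0 ≤ η x y) (q : α → ℝ)
    (hq : ∀ x, 0 ≤ q x) (hsum : ∑ x, q x = ∑ x, ∑ y, η x y) :
    ∃ ρ : α → β → ℝ, (∀ x y, 0 ≤ ρ x y) ∧ (∀ x, ∑ y, ρ x y = q x) ∧
      (∀ y, ∑ x, ρ x y = ∑ x, η x y) ∧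
      ∑ x, ∑ y, |ρ x y - η x y| ≤ ∑ x, |∑ y, η x y - q x| := by
  set p : α → ℝ := fun x => ∑ y, η x y
  set m : α → ℝ := fun x => min (p x) (q x)
  have hp : ∀ x, 0 ≤ p x := fun x => sum_nonneg fun y _ => hη x y
  have hpm : ∀ x, p x * (m x / p x) = m x := fun x =>
    mul_div_cancel_of_imp' fun h => by simp only [m, h, min_eq_left (hq x)]
  have habs : ∀ x, |p x - q x| = p x + q x - 2 * m x := fun x => by
    linarith [max_sub_min_eq_abs (q x) (p x), min_add_max (q x) (p x), min_comm (p x) (q x)]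
  obtain ⟨ρ, hρ, hrow, hcol, hdist⟩ := exists_keep_and_redistribute η hη (fun x => m x / p x)
    (fun x => div_nonneg (le_min (hp x) (hq x)) (hp x))
    (fun x => div_le_one_of_le₀ (min_le_left _ _) (hp x)) (fun x => q x - m x)
    (fun x => sub_nonneg.2 (min_le_right _ _)) (by
      rw [sum_sub_distrib, hsum, ← sum_sub_distrib]
      exact sum_congr rfl fun x _ => by rw [← sum_mul, mul_sub, mul_one, hpm x])
  refine ⟨ρ, hρ, fun x => by rw [hrow, hpm]; ring, hcol, hdist.trans_eq ?_⟩
  change _ = ∑ x, |p x - q x|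
  simp only [habs, sum_sub_distrib, sum_add_distrib, ← mul_sum]
  linarith

theorem exists_snd_marginal_change (η : α → β → ℝ) (hη : ∀ x y, 0 ≤ η x y) (q : β → ℝ)
    (hq : ∀ y, 0 ≤ q y) (hsum : ∑ y, q y = ∑ x, ∑ y, η x y) :
    ∃ ρ : α → β → ℝ, (∀ x y, 0 ≤ ρ x y) ∧ (∀ x, ∑ y, ρ x y = ∑ y, η x y) ∧
      (∀ y, ∑ x, ρ x y = q y) ∧
      ∑ x, ∑ y, |ρ x y - η x y| ≤ ∑ y, |∑ x, η x y - q y| := by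
  obtain ⟨ρ, hρ, hrow, hcol, hdist⟩ :=
    exists_fst_marginal_change (fun y x => η x y) (fun y x => hη x y) q hq (hsum.trans sum_comm)
  exact ⟨fun x y => ρ y x, fun x y => hρ y x, hcol, hrow, sum_comm.trans_le hdist⟩

end Redistribution

theorem abs_csSup_sub_csSup_le {S T : Set ℝ} {c : ℝ} (hS : S.Nonempty) (hT : T.Nonempty)
    (hS' : BddAbove S) (hT' : BddAbove T) (hST : ∀ x ∈ S, ∃ y ∈ T, |x - y| ≤ c)
    (hTS : ∀ y ∈ T, ∃ x ∈ S, |y - x| ≤ c) : |sSup S - sSup T| ≤ c := by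
  rw [abs_sub_le_iff, sub_le_iff_le_add, sub_le_iff_le_add]
  constructor
  · refine csSup_le hS fun x hx => ?_
    obtain ⟨y, hy, hxy⟩ := hST x hx
    linarith [le_csSup hT' hy, le_abs_self (x - y)]
  · refine csSup_le hT fun y hy => ?_
    obtain ⟨x, hx, hxy⟩ := hTS y hy
    linarith [le_csSup hS' hx, le_abs_self (y - x)]

theorem abs_csInf_sub_csInf_le {S T : Set ℝ} {c : ℝ} (hS : S.Nonempty) (hT : T.Nonempty)
    (hS' : BddBelow S) (hT' : BddBelow T) (hST : ∀ x ∈ S, ∃ y ∈ T, |x - y| ≤ c)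
    (hTS : ∀ y ∈ T, ∃ x ∈ S, |y - x| ≤ c) : |sInf S - sInf T| ≤ c := by
  rw [abs_sub_le_iff, sub_le_comm, sub_le_comm (a := sInf T)]
  constructor
  · refine le_csInf hT fun y hy => ?_
    obtain ⟨x, hx, hxy⟩ := hTS y hy
    linarith [csInf_le hS' hx, neg_abs_le (y - x)]
  · refine le_csInf hS fun x hx => ?_
    obtain ⟨y, hy, hxy⟩ := hST x hx
    linarith [csInf_le hT' hy, neg_abs_le (x - y)]

theorem abs_sum_ite_le_half_sum_abs {ι : Type*} [Fintype ι] (g : ι → ℝ) (hg : ∑ i, g i = 0)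
    (P : ι → Prop) [DecidablePred P] :
    |∑ i, if P i then g i else 0| ≤ 1 / 2 * ∑ i, |g i| := by
  have hsplit := sum_filter_add_sum_filter_not univ P g
  have hsplit_abs := sum_filter_add_sum_filter_not univ P fun i => |g i|
  have hP := abs_sum_le_sum_abs g (univ.filter P)
  have hnotP := abs_sum_le_sum_abs g (univ.filter fun i => ¬P i)
  have hcompl : |∑ i ∈ univ.filter P, g i| = |∑ i ∈ univ.filter fun i => ¬P i, g i| := by
    rw [eq_neg_of_add_eq_zero_left (hsplit.trans hg), abs_neg]
  rw [← sum_filter]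
  linarith

theorem dTV_comm (k : ℕ) (p q : Fin k → ℝ) : dTV k p q = dTV k q p := by
  simp only [dTV, abs_sub_comm (p _)]

section Couplings

variable {k : ℕ}

theorem IsJoint.sum_ite_nonneg {η : Fin k → Fin k → ℝ} (hη : IsJoint k η)
    (P : Fin k → Fin k → Prop) [∀ x y, Decidable (P x y)] :
    0 ≤ ∑ x, ∑ y, if P x y then η x y else 0 :=
  sum_nonneg fun x _ => sum_nonneg fun y _ => by split_ifs <;> simp [hη.1 x y]

theorem IsJoint.sum_ite_le_one {η : Fin k → Fin k → ℝ} (hη : IsJoint k η)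
    (P : Fin k → Fin k → Prop) [∀ x y, Decidable (P x y)] :
    ∑ x, ∑ y, (if P x y then η x y else 0) ≤ 1 :=
  hη.2 ▸ sum_le_sum fun x _ => sum_le_sum fun y _ => by split_ifs <;> simp [hη.1 x y]

theorem abs_sum_ite_sub_sum_ite_le_dTV2 {ρ η : Fin k → Fin k → ℝ} (hρ : IsJoint k ρ)
    (hη : IsJoint k η) (P : Fin k → Fin k → Prop) [∀ x y, Decidable (P x y)] :
    |(∑ x, ∑ y, if P x y then ρ x y else 0) - ∑ x, ∑ y, if P x y then η x y else 0| ≤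
      dTV2 k ρ η := by
  have h := abs_sum_ite_le_half_sum_abs (fun z : Fin k × Fin k => ρ z.1 z.2 - η z.1 z.2)
    (by simp only [Fintype.sum_prod_type, sum_sub_distrib, hρ.2, hη.2, sub_self])
    fun z => P z.1 z.2
  simp only [Fintype.sum_prod_type] at h
  rw [dTV2, ← sum_sub_distrib]
  convert h using 4 with x _
  rw [← sum_sub_distrib]
  exact sum_congr rfl fun y _ => by split_ifs <;> simp

theorem exists_isJoint_dTV2_le {η : Fin k → Fin k → ℝ} (hη : IsJoint k η) {a b : Fin k → ℝ}
    (ha : IsDist k a) (hb : IsDist k b) :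
    ∃ ρ, IsJoint k ρ ∧ margA k ρ = a ∧ margB k ρ = b ∧
      dTV2 k ρ η ≤ dTV k (margA k η) a + dTV k (margB k η) b := by
  obtain ⟨η', hη', hrow', hcol', hdist'⟩ :=
    exists_fst_marginal_change η hη.1 a ha.1 (ha.2.trans hη.2.symm)
  obtain ⟨ρ, hρ, hrow, hcol, hdist⟩ :=
    exists_snd_marginal_change η' hη' b hb.1 (hb.2.trans (by simp only [hrow', ha.2]))
  refine ⟨ρ, ⟨hρ, by simp only [hrow, hrow', ha.2]⟩, funext fun x => (hrow x).trans (hrow' x),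
    funext hcol, ?_⟩
  have htriangle : ∑ x, ∑ y, |ρ x y - η x y| ≤
      ∑ x, ∑ y, |ρ x y - η' x y| + ∑ x, ∑ y, |η' x y - η x y| := by
    simp only [← sum_add_distrib]
    gcongr
    exact abs_sub_le _ _ _
  simp only [hcol'] at hdist
  simp only [dTV2, dTV, margA, margB]
  linarith

-- `nuL k r a b` is `sSup (couplingValues k (qLow k r) a b)` by definition, and `nuU` the `sInf`.
def couplingValues (k : ℕ) (f : (Fin k → Fin k → ℝ) → ℝ) (a b : Fin k → ℝ) : Set ℝ :=
  {v | ∃ η, IsJoint k η ∧ margA k η = a ∧ margB k η = b ∧ v = f η}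

variable {f : (Fin k → Fin k → ℝ) → ℝ}

theorem couplingValues_nonempty {a b : Fin k → ℝ} (ha : IsDist k a) (hb : IsDist k b) :
    (couplingValues k f a b).Nonempty := by
  refine ⟨_, fun x y => a x * b y, ⟨fun x y => mul_nonneg (ha.1 x) (hb.1 y), ?_⟩, ?_, ?_, rfl⟩
  · simp only [← mul_sum, hb.2, mul_one, ha.2]
  · funext x; simp only [margA, ← mul_sum, hb.2, mul_one]
  · funext y; simp only [margB, ← sum_mul, ha.2, one_mul]

theorem exists_mem_couplingValues_abs_sub_le
    (hf : ∀ ρ η, IsJoint k ρ → IsJoint k η → |f ρ - f η| ≤ dTV2 k ρ η)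
    {a b a' b' : Fin k → ℝ} (ha' : IsDist k a') (hb' : IsDist k b') :
    ∀ v ∈ couplingValues k f a b, ∃ w ∈ couplingValues k f a' b',
      |v - w| ≤ dTV k a a' + dTV k b b' := by
  rintro _ ⟨η, hη, rfl, rfl, rfl⟩
  obtain ⟨ρ, hρ, hρa, hρb, hdist⟩ := exists_isJoint_dTV2_le hη ha' hb'
  exact ⟨f ρ, ⟨ρ, hρ, hρa, hρb, rfl⟩, abs_sub_comm (f η) _ ▸ (hf ρ η hρ hη).trans hdist⟩

variable {ηa ηb ρa ρb : Fin k → ℝ}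

theorem abs_sSup_couplingValues_sub_le
    (hf : ∀ ρ η, IsJoint k ρ → IsJoint k η → |f ρ - f η| ≤ dTV2 k ρ η)
    (hf₁ : ∀ η, IsJoint k η → f η ≤ 1)
    (h1 : IsDist k ηa) (h2 : IsDist k ρa) (h3 : IsDist k ηb) (h4 : IsDist k ρb) :
    |sSup (couplingValues k f ηa ηb) - sSup (couplingValues k f ρa ρb)| ≤
      dTV k ηa ρa + dTV k ηb ρb := by
  have hbdd : ∀ a b, BddAbove (couplingValues k f a b) := fun a b =>
    ⟨1, by rintro _ ⟨η, hη, -, -, rfl⟩; exact hf₁ η hη⟩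
  refine abs_csSup_sub_csSup_le (couplingValues_nonempty h1 h3) (couplingValues_nonempty h2 h4)
    (hbdd _ _) (hbdd _ _) (exists_mem_couplingValues_abs_sub_le hf h2 h4) ?_
  rw [dTV_comm k ηa, dTV_comm k ηb]
  exact exists_mem_couplingValues_abs_sub_le hf h1 h3

theorem abs_sInf_couplingValues_sub_le
    (hf : ∀ ρ η, IsJoint k ρ → IsJoint k η → |f ρ - f η| ≤ dTV2 k ρ η)
    (hf₀ : ∀ η, IsJoint k η → 0 ≤ f η)
    (h1 : IsDist k ηa) (h2 : IsDist k ρa) (h3 : IsDist k ηb) (h4 : IsDist k ρb) :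
    |sInf (couplingValues k f ηa ηb) - sInf (couplingValues k f ρa ρb)| ≤
      dTV k ηa ρa + dTV k ηb ρb := by
  have hbdd : ∀ a b, BddBelow (couplingValues k f a b) := fun a b =>
    ⟨0, by rintro _ ⟨η, hη, -, -, rfl⟩; exact hf₀ η hη⟩
  refine abs_csInf_sub_csInf_le (couplingValues_nonempty h1 h3) (couplingValues_nonempty h2 h4)
    (hbdd _ _) (hbdd _ _) (exists_mem_couplingValues_abs_sub_le hf h2 h4) ?_
  rw [dTV_comm k ηa, dTV_comm k ηb]
  exact exists_mem_couplingValues_abs_sub_le hf h1 h3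

theorem abs_widthOf_sub_widthOf_le (r : ℝ)
    (h1 : IsDist k ηa) (h2 : IsDist k ρa) (h3 : IsDist k ηb) (h4 : IsDist k ρb) :
    |widthOf k r ηa ηb - widthOf k r ρa ρb| ≤ dTV k ηa ρa + dTV k ηb ρb := by
  have hL : |nuL k r ηa ηb - nuL k r ρa ρb| ≤ dTV k ηa ρa + dTV k ηb ρb :=
    abs_sSup_couplingValues_sub_le (fun ρ η hρ hη => abs_sum_ite_sub_sum_ite_le_dTV2 hρ hη _)
      (fun η hη => hη.sum_ite_le_one _) h1 h2 h3 h4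
  have hU : |nuU k r ηa ηb - nuU k r ρa ρb| ≤ dTV k ηa ρa + dTV k ηb ρb :=
    abs_sInf_couplingValues_sub_le (fun ρ η hρ hη => abs_sum_ite_sub_sum_ite_le_dTV2 hρ hη _)
      (fun η hη => hη.sum_ite_nonneg _) h1 h2 h3 h4
  have hc : 0 ≤ dTV k ηa ρa + dTV k ηb ρb := (abs_nonneg _).trans hL
  refine (abs_max_sub_max_le_max _ _ _ _).trans (max_le ?_ ?_) <;>
    refine (abs_max_sub_max_le_max _ _ _ _).trans (max_le ?_ (by simpa using hc))
  · rwa [sub_sub_sub_cancel_right]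
  · rwa [sub_sub_sub_cancel_left, abs_sub_comm]

theorem widthOf_nonneg (r : ℝ) (a b : Fin k → ℝ) : 0 ≤ widthOf k r a b :=
  le_max_of_le_left (le_max_right _ _)

end Couplings

theorem stmt16 (k : ℕ) (ηa ρa ηb ρb : Fin k → ℝ)
    (h1 : IsDist k ηa) (h2 : IsDist k ρa) (h3 : IsDist k ηb) (h4 : IsDist k ρb)
    (δ : ℝ) (hda : dTV k ηa ρa ≤ δ) (hdb : dTV k ηb ρb ≤ δ) :
    |epsStar k ηa ηb - epsStar k ρa ρb| ≤ 2 * δ := by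
  have hk : (1 : ℤ) ≤ k := by
    rcases k with _ | k
    · simp [IsDist] at h1
    · omega
  have hwidth (r : ℝ) : |widthOf k r ηa ηb - widthOf k r ρa ρb| ≤ 2 * δ :=
    (abs_widthOf_sub_widthOf_le r h1 h2 h3 h4).trans (by linarith)
  refine abs_csInf_sub_csInf_le ⟨_, 0, by omega, by omega, rfl⟩ ⟨_, 0, by omega, by omega, rfl⟩
    ⟨0, ?_⟩ ⟨0, ?_⟩ ?_ ?_
  all_goals rintro _ ⟨r, hr₁, hr₂, rfl⟩
  · exact widthOf_nonneg _ _ _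
  · exact widthOf_nonneg _ _ _
  · exact ⟨_, ⟨r, hr₁, hr₂, rfl⟩, hwidth r⟩
  · exact ⟨_, ⟨r, hr₁, hr₂, rfl⟩, abs_sub_comm (widthOf k r ηa ηb) _ ▸ hwidth r⟩
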